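/- Let u(·,t) be a smooth solution of the normalized flow ∂_t u = −θ(t) f(x) r^{n+1} K / φ(r) + u on S^n × [0,T), with θ(t) = ∫ φ(r) dξ / ∫ f dx. Then the functional J(t) = ∫_{S^n} log u(x,t) f(x) dx is non-increasing in t, and dJ/dt = 0 at time t if and only if u(·,t) satisfies the elliptic equation (u φ(r)/r^{n+1}) det(u_{ij} + u δ_{ij}) = θ(t) f on S^n. -/

import Mathlib

/-
Along the flow `∂ₜ log u = 1 - θ f / g` with `g = u φ(r) / (r^{n+1} K)`, so
`J'(t) = ∫ (f - θ f² / g)`. The normalisation of `θ` says exactly `∫ g = θ ∫ f`, and with it the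
pointwise identity `f - θ f² / g = (g / θ - f) - (θ f - g)² / (θ g)` integrates to
`J'(t) = -∫ (θ f - g)² / (θ g) ≤ 0`. Since the sphere measure charges every nonempty open set and
the integrand is continuous, equality forces `g = θ f` everywhere. Differentiating under the
integral sign is legitimate because the time derivative of the integrand is jointly continuous,
hence uniformly continuous in time on the compact sphere.
-/

open Metric MeasureTheory Set Filter Topology

theorem norm_sub_sub_mul_le_of_hasDerivWithinAt {g g' : ℝ → ℝ} {s : Set ℝ} {t τ C : ℝ}
    (hs : Convex ℝ s) (ht : t ∈ s) (hτ : τ ∈ s)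
    (hg : ∀ σ ∈ s, HasDerivWithinAt g (g' σ) s σ) (hC : ∀ σ ∈ s, ‖g' σ - g' t‖ ≤ C) :
    ‖g τ - g t - (τ - t) * g' t‖ ≤ C * ‖τ - t‖ := by
  have hlin : ∀ σ ∈ s, HasDerivWithinAt (fun σ => g σ - g' t * σ) (g' σ - g' t) s σ :=
    fun σ hσ => ((hg σ hσ).sub ((hasDerivWithinAt_id σ s).const_mul (g' t))).congr_deriv (by ring)
  calc ‖g τ - g t - (τ - t) * g' t‖ = ‖(g τ - g' t * τ) - (g t - g' t * t)‖ := by ring_nf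
    _ ≤ C * ‖τ - t‖ := hs.norm_image_sub_le_of_norm_hasDerivWithin_le hlin hC ht hτ

theorem hasDerivWithinAt_log_mul_of_flow {w : ℝ → ℝ} {s : Set ℝ} {t θ c ρ κ Φ : ℝ}
    (hw : HasDerivWithinAt w (-θ * c * ρ * κ / Φ + w t) s t) (hwt : w t ≠ 0) :
    HasDerivWithinAt (fun σ => Real.log (w σ) * c) (c - θ * c ^ 2 / (w t * Φ / (ρ * κ))) s t :=
  ((hw.log hwt).mul_const c).congr_deriv (by rw [add_div, div_self hwt, div_div_eq_mul_div]; ring)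

section CompactSpace

variable {X : Type*} [TopologicalSpace X] [CompactSpace X] [MeasurableSpace X]
  [OpensMeasurableSpace X] {μ : Measure X} [IsFiniteMeasure μ] {f g : X → ℝ} {θ : ℝ}

theorem Continuous.integrable_of_compactSpace (hg : Continuous g) : Integrable g μ :=
  hg.integrable_of_hasCompactSupport (HasCompactSupport.of_compactSpace g)

theorem integral_pos_of_continuous_of_forall_pos [μ.IsOpenPosMeasure] [Nonempty X]
    (hg : Continuous g) (hpos : ∀ x, 0 < g x) : 0 < ∫ x, g x ∂μ :=
  integral_pos_of_integrable_nonneg_nonzero hg hg.integrable_of_compactSpace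
    (fun x => (hpos x).le) (hpos (Classical.arbitrary X)).ne'

theorem integral_eq_zero_iff_of_continuous_of_nonneg [μ.IsOpenPosMeasure]
    (hg : Continuous g) (hnn : 0 ≤ g) : ∫ x, g x ∂μ = 0 ↔ g = 0 := by
  rw [integral_eq_zero_iff_of_nonneg hnn hg.integrable_of_compactSpace,
    hg.ae_eq_iff_eq μ continuous_zero]

theorem hasDerivWithinAt_integral_of_continuous_deriv {G v : X → ℝ → ℝ} {s : Set ℝ} {t : ℝ}
    (hs : Convex ℝ s) (ht : t ∈ s) (hG : ∀ τ ∈ s, Integrable (fun x => G x τ) μ)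
    (hv : Continuous ↿v) (hGv : ∀ x, ∀ τ ∈ s, HasDerivWithinAt (G x) (v x τ) s τ) :
    HasDerivWithinAt (fun τ => ∫ x, G x τ ∂μ) (∫ x, v x t ∂μ) s t := by
  rw [hasDerivWithinAt_iff_isLittleO, Asymptotics.isLittleO_iff]
  intro c hc
  set ε := c / (μ.real univ + 1)
  have hε : 0 < ε := by positivity
  have hεμ : ε * μ.real univ ≤ c := by
    rw [div_mul_eq_mul_div, div_le_iff₀ (by positivity)]
    nlinarith [measureReal_nonneg (μ := μ) (s := univ)]
  obtain ⟨δ, hδ, hclose⟩ : ∃ δ > 0, ∀ τ ∈ ball t δ, ∀ x, ‖v x τ - v x t‖ ≤ ε := by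
    have hunif : ∀ᶠ τ in 𝓝 t, ∀ x ∈ univ, ‖v x τ - v x t‖ < ε := by
      refine isCompact_univ.eventually_forall_of_forall_eventually fun x _ => ?_
      have hdiff : Continuous fun z : ℝ × X => ‖v z.2 z.1 - v z.2 t‖ := by fun_prop
      exact hdiff.continuousAt.eventually_lt continuousAt_const (by simpa using hε)
    obtain ⟨δ, hδ, h⟩ := Metric.eventually_nhds_iff_ball.1 hunif
    exact ⟨δ, hδ, fun τ hτ x => (h τ hτ x (mem_univ x)).le⟩
  have hvt : Integrable (fun x => v x t) μ :=
    (hv.comp (.prodMk_left t)).integrable_of_compactSpace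
  filter_upwards [inter_mem_nhdsWithin s (ball_mem_nhds t hδ)] with τ hτ
  have hpoint (x : X) : ‖G x τ - G x t - (τ - t) * v x t‖ ≤ ε * ‖τ - t‖ :=
    norm_sub_sub_mul_le_of_hasDerivWithinAt (hs.inter (convex_ball t δ)) ⟨ht, mem_ball_self hδ⟩
      hτ (fun σ hσ => (hGv x σ hσ.1).mono inter_subset_left) (fun σ hσ => hclose σ hσ.2 x)
  calc ‖(∫ x, G x τ ∂μ) - (∫ x, G x t ∂μ) - (τ - t) • ∫ x, v x t ∂μ‖
      = ‖∫ x, (G x τ - G x t - (τ - t) * v x t) ∂μ‖ := by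
        rw [integral_sub, integral_sub, integral_const_mul, smul_eq_mul]
        exacts [hG τ hτ.1, hG t ht, (hG τ hτ.1).sub (hG t ht), hvt.const_mul _]
    _ ≤ ε * ‖τ - t‖ * μ.real univ := norm_integral_le_of_norm_le_const (.of_forall hpoint)
    _ ≤ c * ‖τ - t‖ := by nlinarith [norm_nonneg (τ - t)]

theorem pos_of_integral_eq_mul_integral [μ.IsOpenPosMeasure] [Nonempty X]
    (hf : Continuous f) (hfpos : ∀ x, 0 < f x) (hg : Continuous g) (hgpos : ∀ x, 0 < g x)
    (hfg : ∫ x, g x ∂μ = θ * ∫ x, f x ∂μ) : 0 < θ :=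
  pos_of_mul_pos_left (hfg ▸ integral_pos_of_continuous_of_forall_pos hg hgpos)
    (integral_pos_of_continuous_of_forall_pos hf hfpos).le

theorem integral_sub_mul_sq_div_eq (hf : Continuous f) (hg : Continuous g)
    (hgpos : ∀ x, 0 < g x) (hθ : θ ≠ 0) (hfg : ∫ x, g x ∂μ = θ * ∫ x, f x ∂μ) :
    ∫ x, (f x - θ * f x ^ 2 / g x) ∂μ = -∫ x, (θ * f x - g x) ^ 2 / (θ * g x) ∂μ := by
  have hpt (x : X) : f x - θ * f x ^ 2 / g x
      = (g x / θ - f x) - (θ * f x - g x) ^ 2 / (θ * g x) := by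
    field_simp [(hgpos x).ne']
    ring
  have hcont : Continuous fun x => (θ * f x - g x) ^ 2 / (θ * g x) :=
    (by fun_prop : Continuous _).div (by fun_prop) fun x => mul_ne_zero hθ (hgpos x).ne'
  simp_rw [hpt]
  rw [integral_sub, integral_sub, integral_div, hfg, mul_div_cancel_left₀ _ hθ, sub_self,
    zero_sub]
  exacts [(hg.div_const θ).integrable_of_compactSpace, hf.integrable_of_compactSpace,
    ((hg.div_const θ).sub hf).integrable_of_compactSpace, hcont.integrable_of_compactSpace]

theorem integral_sub_mul_sq_div_nonpos (hf : Continuous f) (hg : Continuous g)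
    (hgpos : ∀ x, 0 < g x) (hθ : 0 < θ) (hfg : ∫ x, g x ∂μ = θ * ∫ x, f x ∂μ) :
    ∫ x, (f x - θ * f x ^ 2 / g x) ∂μ ≤ 0 := by
  rw [integral_sub_mul_sq_div_eq hf hg hgpos hθ.ne' hfg, neg_nonpos]
  exact integral_nonneg fun x => div_nonneg (sq_nonneg _) (mul_pos hθ (hgpos x)).le

theorem integral_sub_mul_sq_div_eq_zero_iff [μ.IsOpenPosMeasure] (hf : Continuous f)
    (hg : Continuous g) (hgpos : ∀ x, 0 < g x) (hθ : 0 < θ)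
    (hfg : ∫ x, g x ∂μ = θ * ∫ x, f x ∂μ) :
    ∫ x, (f x - θ * f x ^ 2 / g x) ∂μ = 0 ↔ ∀ x, g x = θ * f x := by
  have hθg (x : X) : θ * g x ≠ 0 := (mul_pos hθ (hgpos x)).ne'
  have hcont : Continuous fun x => (θ * f x - g x) ^ 2 / (θ * g x) :=
    (by fun_prop : Continuous _).div (by fun_prop) hθg
  rw [integral_sub_mul_sq_div_eq hf hg hgpos hθ.ne' hfg, neg_eq_zero,
    integral_eq_zero_iff_of_continuous_of_nonneg hcont
      fun x => div_nonneg (sq_nonneg _) (mul_pos hθ (hgpos x)).le, funext_iff]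
  simp only [Pi.zero_apply, div_eq_zero_iff, hθg, or_false, pow_eq_zero_iff two_ne_zero,
    sub_eq_zero, eq_comm]

end CompactSpace

/-- `hθjac` is the definition `θ(t) = ∫ φ(r) dξ / ∫ f dx` after the change of variables
`dx/dξ = r^{n+1} K / u`. -/
theorem entropy_monotone_along_flow_general {n : ℕ} (T : ℝ)
    (φ : ℝ → ℝ) (hφcont : ContinuousOn φ (Set.Ioi 0)) (hφpos : ∀ s > (0:ℝ), 0 < φ s)
    (f : sphere (0 : EuclideanSpace ℝ (Fin (n+1))) 1 → ℝ)
    (hf : Continuous f) (hfpos : ∀ x, 0 < f x)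
    (u r K : sphere (0 : EuclideanSpace ℝ (Fin (n+1))) 1 → ℝ → ℝ)
    (huc : Continuous (fun p : sphere (0 : EuclideanSpace ℝ (Fin (n+1))) 1 × ℝ => u p.1 p.2))
    (hrc : Continuous (fun p : sphere (0 : EuclideanSpace ℝ (Fin (n+1))) 1 × ℝ => r p.1 p.2))
    (hKc : Continuous (fun p : sphere (0 : EuclideanSpace ℝ (Fin (n+1))) 1 × ℝ => K p.1 p.2))
    (hupos : ∀ x t, 0 < u x t) (hrpos : ∀ x t, 0 < r x t) (hKpos : ∀ x t, 0 < K x t)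
    (θ : ℝ → ℝ) (hθc : Continuous θ)
    (hθjac : ∀ t ∈ Set.Ico (0:ℝ) T,
      ∫ x, (u x t * φ (r x t)) / ((r x t) ^ (n+1) * K x t)
          ∂(volume : Measure (EuclideanSpace ℝ (Fin (n+1)))).toSphere =
        θ t * ∫ x, f x ∂(volume : Measure (EuclideanSpace ℝ (Fin (n+1)))).toSphere)
    (hflow : ∀ x, ∀ t ∈ Set.Ico (0:ℝ) T,
      HasDerivWithinAt (u x)
        (-θ t * f x * (r x t) ^ (n+1) * K x t / φ (r x t) + u x t)
        (Set.Ico (0:ℝ) T) t) :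
    (∀ s ∈ Set.Ico (0:ℝ) T, ∀ t ∈ Set.Ico (0:ℝ) T, s ≤ t →
      (∫ x, Real.log (u x t) * f x
          ∂(volume : Measure (EuclideanSpace ℝ (Fin (n+1)))).toSphere) ≤
      (∫ x, Real.log (u x s) * f x
          ∂(volume : Measure (EuclideanSpace ℝ (Fin (n+1)))).toSphere)) ∧
    (∀ t ∈ Set.Ico (0:ℝ) T, ∃ d : ℝ,
      HasDerivWithinAt
        (fun s => ∫ x, Real.log (u x s) * f x
            ∂(volume : Measure (EuclideanSpace ℝ (Fin (n+1)))).toSphere)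
        d (Set.Ico (0:ℝ) T) t ∧
      d ≤ 0 ∧
      (d = 0 ↔ ∀ x, u x t * φ (r x t) / ((r x t) ^ (n+1) * K x t) = θ t * f x)) := by
  set μ := (volume : Measure (EuclideanSpace ℝ (Fin (n+1)))).toSphere
  have : Nonempty (sphere (0 : EuclideanSpace ℝ (Fin (n+1))) 1) :=
    NormedSpace.sphere_nonempty_rclike ℝ zero_le_one
  set g := fun x t => u x t * φ (r x t) / ((r x t) ^ (n+1) * K x t)
  have hden (x t) : 0 < r x t ^ (n+1) * K x t := mul_pos (pow_pos (hrpos x t) _) (hKpos x t)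
  have hgpos (x t) : 0 < g x t := div_pos (mul_pos (hupos x t) (hφpos _ (hrpos x t))) (hden x t)
  have hgc : Continuous ↿g :=
    (huc.mul (hφcont.comp_continuous hrc fun p => hrpos p.1 p.2)).div ((hrc.pow _).mul hKc)
      fun p => (hden p.1 p.2).ne'
  have hgt (t : ℝ) : Continuous fun x => g x t := hgc.comp (.prodMk_left t)
  have hderiv : ∀ t ∈ Set.Ico (0:ℝ) T,
      HasDerivWithinAt (fun s => ∫ x, Real.log (u x s) * f x ∂μ)
        (∫ x, (f x - θ t * f x ^ 2 / g x t) ∂μ) (Set.Ico (0:ℝ) T) t := fun t ht =>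
    hasDerivWithinAt_integral_of_continuous_deriv (convex_Ico 0 T) ht
      (fun τ _ => ((huc.comp (.prodMk_left τ)).log fun x => (hupos x τ).ne').mul hf
        |>.integrable_of_compactSpace)
      ((hf.comp continuous_fst).sub (((hθc.comp continuous_snd).mul
        ((hf.comp continuous_fst).pow 2)).div hgc fun p => (hgpos p.1 p.2).ne'))
      fun x τ hτ => hasDerivWithinAt_log_mul_of_flow (hflow x τ hτ) (hupos x τ).ne'
  have hθpos : ∀ t ∈ Set.Ico (0:ℝ) T, 0 < θ t := fun t ht =>
    pos_of_integral_eq_mul_integral hf hfpos (hgt t) (hgpos · t) (hθjac t ht)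
  have hnonpos : ∀ t ∈ Set.Ico (0:ℝ) T, ∫ x, (f x - θ t * f x ^ 2 / g x t) ∂μ ≤ 0 :=
    fun t ht => integral_sub_mul_sq_div_nonpos hf (hgt t) (hgpos · t) (hθpos t ht) (hθjac t ht)
  refine ⟨fun s hs t ht hst => ?_, fun t ht => ⟨_, hderiv t ht, hnonpos t ht,
    integral_sub_mul_sq_div_eq_zero_iff hf (hgt t) (hgpos · t) (hθpos t ht) (hθjac t ht)⟩⟩
  exact antitoneOn_of_hasDerivWithinAt_nonpos (convex_Ico 0 T)
    (fun t ht => (hderiv t ht).continuousWithinAt)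
    (fun t ht => (hderiv t (interior_subset ht)).mono interior_subset)
    (fun t ht => hnonpos t (interior_subset ht)) hs ht hst

/-- Monotonicity of the entropy functional `J(t) = ∫_{S^n} log u(x,t) f(x) dx`
along the normalized flow `∂_t u = -θ(t) f r^{n+1} K / φ(r) + u`:
`J` is non-increasing, and its derivative vanishes at time `t` exactly when
`u` satisfies the elliptic equation `u φ(r)/(r^{n+1} K) = θ(t) f`
(i.e. `(u φ(r)/r^{n+1}) det(u_{ij}+uδ_{ij}) = θ(t) f`, since
`K = 1/det(u_{ij}+uδ_{ij})`).  The hypothesis `hθjac` encodes the definition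
`θ(t) = ∫ φ(r) dξ / ∫ f dx` together with the Jacobian identity
`dx/dξ = r^{n+1}K/u`. -/
theorem entropy_monotone_along_flow {n : ℕ} (T : ℝ) (hT : 0 < T)
    (φ : ℝ → ℝ) (hφcont : ContinuousOn φ (Set.Ioi 0)) (hφpos : ∀ s > (0:ℝ), 0 < φ s)
    (f : sphere (0 : EuclideanSpace ℝ (Fin (n+1))) 1 → ℝ)
    (hf : Continuous f) (hfpos : ∀ x, 0 < f x)
    (u r K : sphere (0 : EuclideanSpace ℝ (Fin (n+1))) 1 → ℝ → ℝ)
    (huc : Continuous (fun p : sphere (0 : EuclideanSpace ℝ (Fin (n+1))) 1 × ℝ => u p.1 p.2))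
    (hrc : Continuous (fun p : sphere (0 : EuclideanSpace ℝ (Fin (n+1))) 1 × ℝ => r p.1 p.2))
    (hKc : Continuous (fun p : sphere (0 : EuclideanSpace ℝ (Fin (n+1))) 1 × ℝ => K p.1 p.2))
    (hupos : ∀ x t, 0 < u x t) (hrpos : ∀ x t, 0 < r x t) (hKpos : ∀ x t, 0 < K x t)
    (θ : ℝ → ℝ) (hθc : Continuous θ)
    (hθjac : ∀ t ∈ Set.Ico (0:ℝ) T,
      ∫ x, (u x t * φ (r x t)) / ((r x t) ^ (n+1) * K x t)
          ∂(volume : Measure (EuclideanSpace ℝ (Fin (n+1)))).toSphere =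
        θ t * ∫ x, f x ∂(volume : Measure (EuclideanSpace ℝ (Fin (n+1)))).toSphere)
    (hflow : ∀ x, ∀ t ∈ Set.Ico (0:ℝ) T,
      HasDerivWithinAt (u x)
        (-θ t * f x * (r x t) ^ (n+1) * K x t / φ (r x t) + u x t)
        (Set.Ico (0:ℝ) T) t) :
    (∀ s ∈ Set.Ico (0:ℝ) T, ∀ t ∈ Set.Ico (0:ℝ) T, s ≤ t →
      (∫ x, Real.log (u x t) * f x
          ∂(volume : Measure (EuclideanSpace ℝ (Fin (n+1)))).toSphere) ≤
      (∫ x, Real.log (u x s) * f x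
          ∂(volume : Measure (EuclideanSpace ℝ (Fin (n+1)))).toSphere)) ∧
    (∀ t ∈ Set.Ico (0:ℝ) T, ∃ d : ℝ,
      HasDerivWithinAt
        (fun s => ∫ x, Real.log (u x s) * f x
            ∂(volume : Measure (EuclideanSpace ℝ (Fin (n+1)))).toSphere)
        d (Set.Ico (0:ℝ) T) t ∧
      d ≤ 0 ∧
      (d = 0 ↔ ∀ x, u x t * φ (r x t) / ((r x t) ^ (n+1) * K x t) = θ t * f x)) :=
  entropy_monotone_along_flow_general T φ hφcont hφpos f hf hfpos u r K huc hrc hKc hupos hrpos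
    hKpos θ hθc hθjac hflow
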